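/- The Barron space B_1 equipped with the norm ‖·‖_{B_1} is a Banach space; in particular, every sequence (f_n) in B_1 that is Cauchy with respect to ‖·‖_{B_1} converges in the norm ‖·‖_{B_1} to some function f ∈ B_1. -/

import Mathlib

open MeasureTheory ENNReal

noncomputable section

abbrev Vec (N : ℕ) := Fin N → ℝ

abbrev Param (N : ℕ) := Vec N × Vec N × Vec N

/-- componentwise ReLU -/
def relu {N : ℕ} (x : Vec N) : Vec N := fun i => max (x i) 0

/-- graph convolution defined via the orthogonal matrix `U` -/
def conv {N : ℕ} (U : Matrix (Fin N) (Fin N) ℝ) (b x : Vec N) : Vec N :=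
  U.mulVec (U.transpose.mulVec b * U.transpose.mulVec x)

/-- The data and standing assumptions of the graph Barron space setting. -/
structure Setting (N : ℕ) where
  U : Matrix (Fin N) (Fin N) ℝ
  W : Submodule ℝ (Vec N)
  dom : Set (Vec N)
  nrm : Vec N → ℝ
  conorm : Vec N → ℝ
  hN : 1 ≤ N
  hU : U.transpose * U = 1
  hdomc : IsCompact dom
  hdomne : dom.Nonempty
  nrm_add : ∀ x y, nrm (x + y) ≤ nrm x + nrm y
  nrm_smul : ∀ (t : ℝ) (x), nrm (t • x) = |t| * nrm x
  nrm_eq_zero : ∀ x, nrm x = 0 ↔ x = 0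
  relu_nrm_le : ∀ x, nrm (relu x) ≤ nrm x
  conorm_add : ∀ b b', b ∈ W → b' ∈ W → conorm (b + b') ≤ conorm b + conorm b'
  conorm_smul : ∀ (t : ℝ) (b), b ∈ W → conorm (t • b) = |t| * conorm b
  conorm_eq_zero : ∀ b, b ∈ W → (conorm b = 0 ↔ b = 0)
  conv_nrm_le : ∀ b ∈ W, ∀ x ∈ dom, nrm (conv U b x) ≤ conorm b

namespace Setting

variable {N : ℕ} (S : Setting N)

/-- dual norm `‖a‖_* = sup {aᵀx : ‖x‖ ≤ 1}` -/
def dual (a : Vec N) : ℝ :=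
  sSup {t : ℝ | ∃ x : Vec N, S.nrm x ≤ 1 ∧ t = ∑ i, a i * x i}

/-- the neuron `aᵀ σ(b*x + c)` -/
def neuron (x : Vec N) (p : Param N) : ℝ :=
  ∑ i, p.1 i * relu (conv S.U p.2.1 x + p.2.2) i

/-- `P_f`: probability measures on `ℝ^N × W × ℝ^N` representing `f` on `Ω`. -/
def reps (f : Vec N → ℝ) : Set (Measure (Param N)) :=
  {ρ | IsProbabilityMeasure ρ ∧ ρ {p : Param N | p.2.1 ∉ S.W} = 0 ∧
    ∀ x ∈ S.dom, Integrable (S.neuron x) ρ ∧ f x = ∫ p, S.neuron x p ∂ρ}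

/-- the weight `‖a‖_* (‖b‖_co + ‖c‖)` -/
def weight (p : Param N) : ℝ := S.dual p.1 * (S.conorm p.2.1 + S.nrm p.2.2)

def cost (ρ : Measure (Param N)) : ℝ≥0∞ :=
  ∫⁻ p, ENNReal.ofReal (S.weight p) ∂ρ

/-- the Barron norm `‖f‖_{B_1} ∈ [0,∞]` -/
def barron (f : Vec N → ℝ) : ℝ≥0∞ :=
  ⨅ ρ ∈ S.reps f, S.cost ρ

/-- membership in the Barron space `B = B_1` -/
def memB (f : Vec N → ℝ) : Prop :=
  (S.reps f).Nonempty ∧ S.barron f < ⊤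

/-- `(a,b,c)` lies in `S × T` -/
def onST (p : Param N) : Prop :=
  S.dual p.1 = 1 ∧ p.2.1 ∈ S.W ∧ S.conorm p.2.1 + S.nrm p.2.2 = 1

/-- output of the shallow GCNN with parameters `θ` -/
def netOut {M : ℕ} (θ : Fin M → Param N) (x : Vec N) : ℝ :=
  (M : ℝ)⁻¹ * ∑ m, S.neuron x (θ m)

/-- the `p`-path norm, `1 ≤ p ≤ ∞` -/
def pathNorm {M : ℕ} (p : ℝ≥0∞) (θ : Fin M → Param N) : ℝ :=
  if p = ⊤ then ⨆ m, S.weight (θ m)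
  else ((M : ℝ)⁻¹ * ∑ m, S.weight (θ m) ^ p.toReal) ^ (p.toReal)⁻¹

/-- the class `C_{Q,p}` of GCNN outputs with `p`-path norm at most `Q` -/
def CQp (Q : ℝ) (p : ℝ≥0∞) : Set (Vec N → ℝ) :=
  {g | ∃ M : ℕ, 1 ≤ M ∧ ∃ θ : Fin M → Param N,
    (∀ m, (θ m).2.1 ∈ S.W) ∧ S.pathNorm p θ ≤ Q ∧ ∀ x ∈ S.dom, g x = S.netOut θ x}

end Setting

namespace Setting

variable {N : ℕ} (S : Setting N)

lemma nrm_zero : S.nrm 0 = 0 := (S.nrm_eq_zero 0).mpr rfl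

lemma nrm_neg (x : Vec N) : S.nrm (-x) = S.nrm x := by
  have := S.nrm_smul (-1) x
  simpa using this

lemma nrm_nonneg (x : Vec N) : 0 ≤ S.nrm x := by
  have h := S.nrm_add x (-x)
  rw [add_neg_cancel, S.nrm_zero, S.nrm_neg] at h
  linarith

lemma nrm_sum_le {ι : Type*} (s : Finset ι) (g : ι → Vec N) :
    S.nrm (∑ i ∈ s, g i) ≤ ∑ i ∈ s, S.nrm (g i) := by
  classical
  induction s using Finset.induction with
  | empty => simp [S.nrm_zero]
  | insert _ _ hx ih =>
    rename_i a s
    rw [Finset.sum_insert hx, Finset.sum_insert hx]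
    exact le_trans (S.nrm_add _ _) (by linarith)

lemma nrm_le_const : ∃ C : ℝ, 0 ≤ C ∧ ∀ x : Vec N, S.nrm x ≤ C * ‖x‖ := by
  refine ⟨∑ i, S.nrm (fun j => if j = i then 1 else 0), Finset.sum_nonneg fun i _ => S.nrm_nonneg _, fun x => ?_⟩
  have hx : x = ∑ i, x i • (fun j => if j = i then 1 else 0 : Vec N) := by
    funext j; simp [Finset.sum_apply]
  calc S.nrm x ≤ ∑ i, S.nrm (x i • (fun j => if j = i then 1 else 0 : Vec N)) := by
        conv_lhs => rw [hx]
        exact S.nrm_sum_le _ _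
    _ ≤ ∑ i, ‖x‖ * S.nrm (fun j => if j = i then 1 else 0) := by
        refine Finset.sum_le_sum fun i _ => ?_
        rw [S.nrm_smul]
        exact mul_le_mul_of_nonneg_right (by simpa using norm_le_pi_norm x i) (S.nrm_nonneg _)
    _ = (∑ i, S.nrm (fun j => if j = i then 1 else 0)) * ‖x‖ := by rw [← Finset.mul_sum]; ring

lemma nrm_continuous : Continuous S.nrm := by
  obtain ⟨C, hC0, hC⟩ := S.nrm_le_const
  refine (LipschitzWith.of_dist_le_mul (K := ⟨C, hC0⟩) fun x y => ?_).continuous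
  have h1 : S.nrm x - S.nrm y ≤ S.nrm (x - y) := by
    have := S.nrm_add (x - y) y; simpa using this
  have h2 : S.nrm y - S.nrm x ≤ S.nrm (x - y) := by
    have := S.nrm_add (y - x) x
    rw [sub_add_cancel] at this
    have e : S.nrm (y - x) = S.nrm (x - y) := by rw [← S.nrm_neg (x - y)]; congr 1; abel
    linarith [e ▸ this]
  have : dist (S.nrm x) (S.nrm y) ≤ S.nrm (x - y) := by
    rw [Real.dist_eq, abs_sub_le_iff]; exact ⟨h1, h2⟩
  refine this.trans ((hC _).trans ?_)
  rw [dist_eq_norm]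
  exact le_rfl

/-- lower bound: the Euclidean (sup) norm is dominated by `nrm`. -/
lemma exists_nrm_lower : ∃ c : ℝ, 0 < c ∧ ∀ x : Vec N, c * ‖x‖ ≤ S.nrm x := by
  rcases Nat.eq_zero_or_pos N with h0 | hpos
  · refine ⟨1, one_pos, fun x => ?_⟩
    have hx : x = 0 := by funext i; exact absurd i.2 (by omega)
    simp [hx, S.nrm_zero]
  · have hne : (Metric.sphere (0 : Vec N) 1).Nonempty := by
      haveI : Nontrivial (Vec N) := by
        refine ⟨fun _ => 0, fun _ => 1, fun h => ?_⟩
        have := congrFun h ⟨0, hpos⟩; simp at this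
      exact NormedSpace.sphere_nonempty.mpr zero_le_one
    obtain ⟨x₀, hx₀, hmin⟩ :=
      (isCompact_sphere (0 : Vec N) 1).exists_isMinOn hne S.nrm_continuous.continuousOn
    have hx₀1 : ‖x₀‖ = 1 := by simpa using hx₀
    have hx₀ne : x₀ ≠ 0 := by intro h; rw [h] at hx₀1; simp at hx₀1
    have hc : 0 < S.nrm x₀ := by
      rcases lt_or_eq_of_le (S.nrm_nonneg x₀) with h | h
      · exact h
      · exact absurd ((S.nrm_eq_zero x₀).mp h.symm) hx₀ne
    refine ⟨S.nrm x₀, hc, fun x => ?_⟩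
    rcases eq_or_ne x 0 with rfl | hx
    · simp [S.nrm_zero]
    · have hnx : (0:ℝ) < ‖x‖ := norm_pos_iff.mpr hx
      have hmem : ‖x‖⁻¹ • x ∈ Metric.sphere (0 : Vec N) 1 := by
        simp [norm_smul, abs_of_pos (inv_pos.mpr hnx), inv_mul_cancel₀ hnx.ne']
      have hthis : S.nrm x₀ ≤ S.nrm (‖x‖⁻¹ • x) := hmin hmem
      have h2 : S.nrm (‖x‖⁻¹ • x) = ‖x‖⁻¹ * S.nrm x := by
        rw [S.nrm_smul]; congr 1; exact abs_of_pos (inv_pos.mpr hnx)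
      rw [h2] at hthis
      calc S.nrm x₀ * ‖x‖ ≤ (‖x‖⁻¹ * S.nrm x) * ‖x‖ := by
            exact mul_le_mul_of_nonneg_right hthis hnx.le
        _ = S.nrm x := by field_simp

lemma dualSet_bddAbove (a : Vec N) :
    BddAbove {t : ℝ | ∃ x : Vec N, S.nrm x ≤ 1 ∧ t = ∑ i, a i * x i} := by
  obtain ⟨c, hc, hlow⟩ := S.exists_nrm_lower
  refine ⟨(∑ i, |a i|) * c⁻¹, fun t ht => ?_⟩
  obtain ⟨x, hx, rfl⟩ := ht
  have hxnorm : ‖x‖ ≤ c⁻¹ := by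
    have := hlow x
    rw [← le_div_iff₀' hc] at this
    calc ‖x‖ ≤ S.nrm x / c := this
      _ ≤ 1 / c := by gcongr
      _ = c⁻¹ := one_div c
  calc ∑ i, a i * x i ≤ ∑ i, |a i| * c⁻¹ := by
        refine Finset.sum_le_sum fun i _ => ?_
        calc a i * x i ≤ |a i * x i| := le_abs_self _
          _ = |a i| * |x i| := abs_mul _ _
          _ ≤ |a i| * c⁻¹ := by
              refine mul_le_mul_of_nonneg_left ?_ (abs_nonneg _)
              exact (by simpa using norm_le_pi_norm x i : |x i| ≤ ‖x‖).trans hxnorm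
    _ = (∑ i, |a i|) * c⁻¹ := by rw [← Finset.sum_mul]

lemma zero_mem_dualSet (a : Vec N) :
    (0:ℝ) ∈ {t : ℝ | ∃ x : Vec N, S.nrm x ≤ 1 ∧ t = ∑ i, a i * x i} :=
  ⟨0, by simp only [S.nrm_zero]; exact zero_le_one, by simp⟩

lemma dual_nonneg (a : Vec N) : 0 ≤ S.dual a :=
  le_csSup (S.dualSet_bddAbove a) (S.zero_mem_dualSet a)

lemma pairing_le_dual (a y : Vec N) : ∑ i, a i * y i ≤ S.dual a * S.nrm y := by
  rcases eq_or_lt_of_le (S.nrm_nonneg y) with h | h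
  · have hy : y = 0 := (S.nrm_eq_zero y).mp h.symm
    simp [hy, S.nrm_zero]
  · have hmem : S.nrm ((S.nrm y)⁻¹ • y) ≤ 1 := by
      rw [S.nrm_smul, abs_of_pos (inv_pos.mpr h), inv_mul_cancel₀ h.ne']
    have hle : ∑ i, a i * ((S.nrm y)⁻¹ • y) i ≤ S.dual a :=
      le_csSup (S.dualSet_bddAbove a) ⟨_, hmem, rfl⟩
    have : (S.nrm y)⁻¹ * ∑ i, a i * y i ≤ S.dual a := by
      rw [Finset.mul_sum] at *
      convert hle using 2 with i
      simp [Pi.smul_apply, smul_eq_mul]; ring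
    calc ∑ i, a i * y i = S.nrm y * ((S.nrm y)⁻¹ * ∑ i, a i * y i) := by
          field_simp
      _ ≤ S.nrm y * S.dual a := mul_le_mul_of_nonneg_left this h.le
      _ = S.dual a * S.nrm y := mul_comm _ _

lemma abs_pairing_le_dual (a y : Vec N) : |∑ i, a i * y i| ≤ S.dual a * S.nrm y := by
  rw [abs_le]
  constructor
  · have := S.pairing_le_dual a (-y)
    rw [S.nrm_neg] at this
    have e : ∑ i, a i * (-y) i = -∑ i, a i * y i := by
      rw [← Finset.sum_neg_distrib]; congr 1 with i; simp
    linarith [e ▸ this]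
  · exact S.pairing_le_dual a y

lemma dual_neg (a : Vec N) : S.dual (-a) = S.dual a := by
  have key : ∀ b : Vec N, {t : ℝ | ∃ x : Vec N, S.nrm x ≤ 1 ∧ t = ∑ i, (-b) i * x i}
      = {t : ℝ | ∃ x : Vec N, S.nrm x ≤ 1 ∧ t = ∑ i, b i * x i} := by
    intro b
    ext t
    constructor
    · rintro ⟨x, hx, rfl⟩
      exact ⟨-x, by rw [S.nrm_neg]; exact hx, by congr 1 with i; simp⟩
    · rintro ⟨x, hx, rfl⟩
      exact ⟨-x, by rw [S.nrm_neg]; exact hx, by congr 1 with i; simp⟩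
  unfold dual
  rw [key]

lemma conorm_zero : S.conorm 0 = 0 := (S.conorm_eq_zero 0 S.W.zero_mem).mpr rfl

lemma conorm_nonneg {b : Vec N} (hb : b ∈ S.W) : 0 ≤ S.conorm b := by
  have h := S.conorm_add b (-b) hb (S.W.neg_mem hb)
  have hneg : S.conorm (-b) = S.conorm b := by
    have := S.conorm_smul (-1) b hb; simpa using this
  rw [add_neg_cancel, S.conorm_zero, hneg] at h
  linarith

lemma nrm_relu_nonneg (x : Vec N) : 0 ≤ S.nrm (relu x) := S.nrm_nonneg _

/-- `relu` commutes with nonnegative scaling. -/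
lemma relu_smul {t : ℝ} (ht : 0 ≤ t) (x : Vec N) : relu (t • x) = t • relu x := by
  funext i
  simp only [relu, Pi.smul_apply, smul_eq_mul]
  rcases le_or_gt 0 (x i) with h | h
  · rw [max_eq_left (mul_nonneg ht h), max_eq_left h]
  · rw [max_eq_right (mul_nonpos_of_nonneg_of_nonpos ht h.le), max_eq_right h.le, mul_zero]

/-- `conv` is linear in `b`. -/
lemma conv_smul (t : ℝ) (b x : Vec N) : conv S.U (t • b) x = t • conv S.U b x := by
  unfold conv
  rw [Matrix.mulVec_smul]
  have h : (t • S.U.transpose.mulVec b) * S.U.transpose.mulVec x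
       = t • (S.U.transpose.mulVec b * S.U.transpose.mulVec x) := by
    funext j; simp [smul_eq_mul]; ring
  rw [h, Matrix.mulVec_smul]

/-- `neuron` scales under nonnegative scaling of `(b, c)`. -/
lemma neuron_smulBC {t : ℝ} (ht : 0 ≤ t) (x : Vec N) (p : Param N) :
    S.neuron x (p.1, t • p.2.1, t • p.2.2) = t * S.neuron x p := by
  unfold neuron
  have h : conv S.U (t • p.2.1) x + t • p.2.2 = t • (conv S.U p.2.1 x + p.2.2) := by
    rw [S.conv_smul, smul_add]
  rw [h, relu_smul ht]
  rw [Finset.mul_sum]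
  congr 1 with i
  simp [Pi.smul_apply, smul_eq_mul]
  ring

lemma neuron_negA (x : Vec N) (p : Param N) :
    S.neuron x (-p.1, p.2.1, p.2.2) = -S.neuron x p := by
  unfold neuron
  rw [← Finset.sum_neg_distrib]
  congr 1 with i
  simp

/-- the key pointwise bound `|neuron x p| ≤ weight p` for `b ∈ W`, `x ∈ Ω`. -/
lemma abs_neuron_le_weight {x : Vec N} (hx : x ∈ S.dom) {p : Param N} (hp : p.2.1 ∈ S.W) :
    |S.neuron x p| ≤ S.weight p := by
  obtain ⟨a, b, c⟩ := p
  unfold neuron weight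
  have h1 : |∑ i, a i * relu (conv S.U b x + c) i| ≤
      S.dual a * S.nrm (relu (conv S.U b x + c)) := S.abs_pairing_le_dual a _
  refine h1.trans ?_
  refine mul_le_mul_of_nonneg_left ?_ (S.dual_nonneg a)
  refine (S.relu_nrm_le _).trans ?_
  refine (S.nrm_add _ _).trans ?_
  simp only
  gcongr
  exact S.conv_nrm_le b hp x hx

lemma weight_nonneg {p : Param N} (hp : p.2.1 ∈ S.W) : 0 ≤ S.weight p :=
  mul_nonneg (S.dual_nonneg _) (add_nonneg (S.conorm_nonneg hp) (S.nrm_nonneg _))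

lemma weight_negA (p : Param N) : S.weight (-p.1, p.2.1, p.2.2) = S.weight p := by
  unfold weight
  rw [S.dual_neg]

lemma weight_smulBC {t : ℝ} (ht : 0 ≤ t) {p : Param N} (hp : p.2.1 ∈ S.W) :
    S.weight (p.1, t • p.2.1, t • p.2.2) = t * S.weight p := by
  unfold weight
  rw [S.conorm_smul t _ hp, S.nrm_smul, abs_of_nonneg ht]
  ring

lemma continuous_neuron (x : Vec N) : Continuous (S.neuron x) := by
  unfold neuron
  refine continuous_finset_sum _ fun i _ => ?_
  refine Continuous.mul (by fun_prop) ?_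
  have hconv : Continuous fun p : Param N => conv S.U p.2.1 x := by
    unfold conv
    exact Continuous.matrix_mulVec continuous_const
      ((Continuous.matrix_mulVec continuous_const (by fun_prop : Continuous fun p : Param N => p.2.1)).mul continuous_const)
  have h2 : Continuous fun p : Param N => (conv S.U p.2.1 x + p.2.2) i :=
    (continuous_apply i).comp (hconv.add (by fun_prop : Continuous fun p : Param N => p.2.2))
  exact h2.max continuous_const

lemma measurableSet_notW : MeasurableSet {p : Param N | p.2.1 ∉ S.W} := by
  have hW : IsClosed (S.W : Set (Vec N)) := Submodule.closed_of_finiteDimensional S.W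
  have : MeasurableSet {p : Param N | p.2.1 ∈ S.W} := by
    exact (hW.measurableSet.preimage (by fun_prop : Measurable fun p : Param N => p.2.1))
  exact this.compl

/-- the scaling map `(a,b,c) ↦ (a, t•b, t•c)` -/
def scaleBC (t : ℝ) (p : Param N) : Param N := (p.1, t • p.2.1, t • p.2.2)

lemma measurable_scaleBC (t : ℝ) : Measurable (scaleBC (N := N) t) := by
  unfold scaleBC; fun_prop

/-- the negation map `(a,b,c) ↦ (-a, b, c)` -/
def negA (p : Param N) : Param N := (-p.1, p.2.1, p.2.2)

lemma measurable_negA : Measurable (negA (N := N)) := by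
  unfold negA; fun_prop

lemma neuron_negA' (x : Vec N) (p : Param N) : S.neuron x (negA p) = -S.neuron x p :=
  S.neuron_negA x p

lemma neuron_scaleBC {t : ℝ} (ht : 0 ≤ t) (x : Vec N) (p : Param N) :
    S.neuron x (scaleBC t p) = t * S.neuron x p := S.neuron_smulBC ht x p

lemma weight_negA' (p : Param N) : S.weight (negA p) = S.weight p := S.weight_negA p

lemma weight_scaleBC {t : ℝ} (ht : 0 ≤ t) {p : Param N} (hp : p.2.1 ∈ S.W) :
    S.weight (scaleBC t p) = t * S.weight p := S.weight_smulBC ht hp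

lemma ae_memW {ρ : Measure (Param N)} (h : ρ {p : Param N | p.2.1 ∉ S.W} = 0) :
    ∀ᵐ p ∂ρ, p.2.1 ∈ S.W := by
  rw [MeasureTheory.ae_iff]
  exact h

lemma abs_le_cost {u : Vec N → ℝ} {ρ : Measure (Param N)} (hρ : ρ ∈ S.reps u)
    {x : Vec N} (hx : x ∈ S.dom) (hfin : S.cost ρ ≠ ⊤) : |u x| ≤ (S.cost ρ).toReal := by
  obtain ⟨hprob, hnull, hrep⟩ := hρ
  obtain ⟨hint, heq⟩ := hrep x hx
  rw [heq]
  have h1 : |∫ p, S.neuron x p ∂ρ| ≤ ∫ p, |S.neuron x p| ∂ρ := by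
    simpa using norm_integral_le_integral_norm (μ := ρ) (S.neuron x)
  refine h1.trans ?_
  have hmeas : MeasureTheory.AEStronglyMeasurable (fun p => |S.neuron x p|) ρ := by
    have := hint.aestronglyMeasurable.norm
    simpa [Real.norm_eq_abs] using this
  have h2 : ∫ p, |S.neuron x p| ∂ρ
      = (∫⁻ p, ENNReal.ofReal |S.neuron x p| ∂ρ).toReal := by
    rw [MeasureTheory.integral_eq_lintegral_of_nonneg_ae
      (Filter.Eventually.of_forall fun p => abs_nonneg _) hmeas]
  rw [h2]
  refine ENNReal.toReal_mono hfin ?_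
  refine MeasureTheory.lintegral_mono_ae ?_
  filter_upwards [S.ae_memW hnull] with p hp
  exact ENNReal.ofReal_le_ofReal (S.abs_neuron_le_weight hx hp)


lemma zero_rep : (Measure.dirac ((0,0,0) : Param N)) ∈ S.reps (fun _ => 0) ∧
    S.cost (Measure.dirac ((0,0,0) : Param N)) = 0 := by
  have hneuron : ∀ x : Vec N, S.neuron x ((0,0,0) : Param N) = 0 := by
    intro x; unfold neuron; simp
  have hweight : S.weight ((0,0,0) : Param N) = 0 := by
    unfold weight
    simp only [S.conorm_zero, S.nrm_zero]
    ring
  refine ⟨⟨inferInstance, ?_, fun x hx => ⟨?_, ?_⟩⟩, ?_⟩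
  · rw [MeasureTheory.Measure.dirac_apply' _ S.measurableSet_notW]
    simp [Set.indicator_apply, S.W.zero_mem]
  · constructor
    · exact (S.continuous_neuron x).aestronglyMeasurable
    · rw [MeasureTheory.hasFiniteIntegral_iff_norm, MeasureTheory.lintegral_dirac]
      simp [hneuron x]
  · rw [MeasureTheory.integral_dirac, hneuron x]
  · unfold cost
    rw [MeasureTheory.lintegral_dirac, hweight]
    simp

lemma neg_rep {u : Vec N → ℝ} {ρ : Measure (Param N)} (hρ : ρ ∈ S.reps u) :
    ρ.map negA ∈ S.reps (-u) ∧ S.cost (ρ.map negA) ≤ S.cost ρ := by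
  obtain ⟨hprob, hnull, hrep⟩ := hρ
  have hpre : negA ⁻¹' {p : Param N | p.2.1 ∉ S.W} = {p : Param N | p.2.1 ∉ S.W} := rfl
  constructor
  · haveI := hprob
    refine ⟨MeasureTheory.Measure.isProbabilityMeasure_map measurable_negA.aemeasurable, ?_, fun x hx => ?_⟩
    · rw [MeasureTheory.Measure.map_apply measurable_negA S.measurableSet_notW, hpre]
      exact hnull
    · obtain ⟨hint, heq⟩ := hrep x hx
      have hint2 : MeasureTheory.Integrable (S.neuron x) (ρ.map negA) := by
        rw [MeasureTheory.integrable_map_measure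
          (S.continuous_neuron x).aestronglyMeasurable measurable_negA.aemeasurable]
        have : (S.neuron x) ∘ negA = fun p => -(S.neuron x p) := by
          funext p; exact S.neuron_negA' x p
        rw [this]
        exact hint.neg
      refine ⟨hint2, ?_⟩
      rw [MeasureTheory.integral_map measurable_negA.aemeasurable
        (S.continuous_neuron x).aestronglyMeasurable]
      have : ∀ p, S.neuron x (negA p) = -(S.neuron x p) := fun p => S.neuron_negA' x p
      simp only [this]
      rw [MeasureTheory.integral_neg, ← heq]
      simp
  · unfold cost
    refine (MeasureTheory.lintegral_map_le _ negA).trans ?_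
    refine le_of_eq (MeasureTheory.lintegral_congr fun p => ?_)
    rw [S.weight_negA' p]


open MeasureTheory in
/-- The master mixture lemma: a countable family of represented functions whose costs
have finite sum can be combined into a single representation of the pointwise sum. -/
lemma mix (h : ℕ → Vec N → ℝ) (ρ : ℕ → Measure (Param N))
    (hρ : ∀ k, ρ k ∈ S.reps (h k)) (htot : ∑' k, S.cost (ρ k) ≠ ⊤)
    (F : Vec N → ℝ) (hF : ∀ x ∈ S.dom, F x = ∑' k, h k x) :
    ∃ μ ∈ S.reps F, S.cost μ ≤ ∑' k, S.cost (ρ k) := by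
  classical
  set t : ℕ → ℝ := fun k => 2 ^ (k + 1) with ht_def
  have ht_pos : ∀ k, (0:ℝ) < t k := fun k => by positivity
  set w : ℕ → ℝ≥0∞ := fun k => 2⁻¹ ^ (k + 1) with hw_def
  have hw_ne_top : ∀ k, w k ≠ ⊤ := fun k => by
    simp [hw_def, ENNReal.inv_ne_top, pow_ne_top]
  have hw_ofReal_t : ∀ k, w k * ENNReal.ofReal (t k) = 1 := by
    intro k
    have h2 : ENNReal.ofReal (t k) = 2 ^ (k+1) := by
      rw [ht_def]
      simp only
      rw [ENNReal.ofReal_pow (by norm_num : (0:ℝ) ≤ 2)]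
      norm_num
    rw [h2, hw_def]
    simp only
    rw [← mul_pow, ENNReal.inv_mul_cancel (by norm_num) (by norm_num), one_pow]
  have hw_toReal : ∀ k, (w k).toReal = (t k)⁻¹ := by
    intro k
    rw [hw_def, ht_def]
    simp only
    rw [ENNReal.toReal_pow, ENNReal.toReal_inv, ← inv_pow]
    norm_num
  have hw_sum : ∑' k, w k = 1 := by
    rw [hw_def]
    simp only
    rw [ENNReal.tsum_geometric_add_one, ENNReal.one_sub_inv_two]
    exact ENNReal.mul_inv_cancel (by norm_num) (by norm_num)
  set ν : ℕ → Measure (Param N) := fun k => (ρ k).map (scaleBC (t k)) with hν_def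
  have hν_prob : ∀ k, IsProbabilityMeasure (ν k) := fun k => by
    haveI := (hρ k).1
    exact Measure.isProbabilityMeasure_map (measurable_scaleBC (t k)).aemeasurable
  have hpre : ∀ k, scaleBC (t k) ⁻¹' {p : Param N | p.2.1 ∉ S.W} = {p : Param N | p.2.1 ∉ S.W} := by
    intro k
    ext p
    simp only [Set.mem_preimage, Set.mem_setOf_eq, scaleBC]
    apply not_congr
    constructor
    · intro hm
      have := S.W.smul_mem (t k)⁻¹ hm
      rwa [smul_smul, inv_mul_cancel₀ (ht_pos k).ne', one_smul] at this
    · intro hb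
      exact S.W.smul_mem _ hb
  have hν_null : ∀ k, ν k {p : Param N | p.2.1 ∉ S.W} = 0 := by
    intro k
    rw [hν_def]
    simp only
    rw [Measure.map_apply (measurable_scaleBC (t k)) S.measurableSet_notW, hpre k]
    exact (hρ k).2.1
  have hν_cost : ∀ k, S.cost (ν k) ≤ ENNReal.ofReal (t k) * S.cost (ρ k) := by
    intro k
    refine (lintegral_map_le _ (scaleBC (t k))).trans ?_
    have hcongr : ∫⁻ p, ENNReal.ofReal (S.weight (scaleBC (t k) p)) ∂(ρ k)
        = ∫⁻ p, ENNReal.ofReal (t k) * ENNReal.ofReal (S.weight p) ∂(ρ k) := by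
      refine lintegral_congr_ae ?_
      filter_upwards [S.ae_memW (hρ k).2.1] with p hp
      rw [S.weight_scaleBC (ht_pos k).le hp, ENNReal.ofReal_mul (ht_pos k).le]
    rw [hcongr, lintegral_const_mul' _ _ ENNReal.ofReal_ne_top]
    exact le_of_eq rfl
  set μ : Measure (Param N) := Measure.sum (fun k => w k • ν k) with hμ_def
  have hμ_null : μ {p : Param N | p.2.1 ∉ S.W} = 0 := by
    rw [hμ_def, Measure.sum_apply _ S.measurableSet_notW]
    simp only [Measure.smul_apply, smul_eq_mul]
    simp [hν_null]
  have hμ_prob : IsProbabilityMeasure μ := by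
    constructor
    rw [hμ_def, Measure.sum_apply _ MeasurableSet.univ]
    simp only [Measure.smul_apply, smul_eq_mul]
    have : ∀ k, ν k Set.univ = 1 := fun k => (hν_prob k).measure_univ
    simp only [this, mul_one]
    exact hw_sum
  have hlin : ∀ f : Param N → ℝ≥0∞, ∫⁻ p, f p ∂μ = ∑' k, w k * ∫⁻ p, f p ∂(ν k) := by
    intro f
    rw [hμ_def, lintegral_sum_measure]
    congr 1
    funext k
    rw [lintegral_smul_measure, smul_eq_mul]
  have hνbound : ∀ k, ∀ x ∈ S.dom, ∫⁻ p, ENNReal.ofReal ‖S.neuron x p‖ ∂(ν k)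
      ≤ ENNReal.ofReal (t k) * S.cost (ρ k) := by
    intro k x hx
    refine (lintegral_map_le _ (scaleBC (t k))).trans ?_
    have : ∫⁻ p, ENNReal.ofReal ‖S.neuron x (scaleBC (t k) p)‖ ∂(ρ k)
        ≤ ∫⁻ p, ENNReal.ofReal (t k) * ENNReal.ofReal (S.weight p) ∂(ρ k) := by
      refine lintegral_mono_ae ?_
      filter_upwards [S.ae_memW (hρ k).2.1] with p hp
      rw [S.neuron_scaleBC (ht_pos k).le]
      calc ENNReal.ofReal ‖t k * S.neuron x p‖
          ≤ ENNReal.ofReal (t k * S.weight p) := by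
            refine ENNReal.ofReal_le_ofReal ?_
            rw [Real.norm_eq_abs, abs_mul, abs_of_pos (ht_pos k)]
            exact mul_le_mul_of_nonneg_left (S.abs_neuron_le_weight hx hp) (ht_pos k).le
        _ = ENNReal.ofReal (t k) * ENNReal.ofReal (S.weight p) :=
            ENNReal.ofReal_mul (ht_pos k).le
    refine this.trans ?_
    rw [lintegral_const_mul' _ _ ENNReal.ofReal_ne_top]
    exact le_of_eq rfl
  have hfin : ∀ x ∈ S.dom, ∫⁻ p, ENNReal.ofReal ‖S.neuron x p‖ ∂μ ≤ ∑' k, S.cost (ρ k) := by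
    intro x hx
    rw [hlin]
    calc ∑' k, w k * ∫⁻ p, ENNReal.ofReal ‖S.neuron x p‖ ∂(ν k)
        ≤ ∑' k, w k * (ENNReal.ofReal (t k) * S.cost (ρ k)) :=
          ENNReal.tsum_le_tsum fun k => mul_le_mul_right (hνbound k x hx) _
      _ = ∑' k, S.cost (ρ k) := by
          congr 1
          funext k
          rw [← mul_assoc, hw_ofReal_t k, one_mul]
  have hint : ∀ x ∈ S.dom, Integrable (S.neuron x) μ := by
    intro x hx
    refine ⟨(S.continuous_neuron x).aestronglyMeasurable, ?_⟩
    rw [hasFiniteIntegral_iff_norm]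
    exact lt_of_le_of_lt (hfin x hx) (lt_of_le_of_ne le_top htot)
  refine ⟨μ, ⟨hμ_prob, hμ_null, fun x hx => ⟨hint x hx, ?_⟩⟩, ?_⟩
  · rw [integral_sum_measure (hμ_def ▸ hint x hx)]
    rw [hF x hx]
    congr 1
    funext k
    rw [integral_smul_measure]
    have h1 : ∫ p, S.neuron x p ∂(ν k) = ∫ p, S.neuron x (scaleBC (t k) p) ∂(ρ k) := by
      rw [hν_def]
      exact integral_map (measurable_scaleBC (t k)).aemeasurable
        (S.continuous_neuron x).aestronglyMeasurable
    have h2 : ∫ p, S.neuron x (scaleBC (t k) p) ∂(ρ k) = t k * h k x := by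
      have he : ∀ p, S.neuron x (scaleBC (t k) p) = t k * S.neuron x p :=
        fun p => S.neuron_scaleBC (ht_pos k).le x p
      simp only [he]
      rw [integral_const_mul, ← ((hρ k).2.2 x hx).2]
    rw [h1, h2, hw_toReal, smul_eq_mul, ← mul_assoc, inv_mul_cancel₀ (ht_pos k).ne', one_mul]
  · unfold cost
    rw [hlin]
    refine (ENNReal.tsum_le_tsum fun k => mul_le_mul_right (hν_cost k) _).trans (le_of_eq ?_)
    congr 1
    funext k
    rw [← mul_assoc, hw_ofReal_t k, one_mul]
    rfl


lemma barron_le {F : Vec N → ℝ} {μ : Measure (Param N)} (hμ : μ ∈ S.reps F) :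
    S.barron F ≤ S.cost μ := iInf₂_le μ hμ

lemma exists_rep_of_barron_lt {F : Vec N → ℝ} {C : ℝ≥0∞} (hC : S.barron F < C) :
    ∃ ρ ∈ S.reps F, S.cost ρ < C := by
  unfold barron at hC
  obtain ⟨ρ, hρ⟩ := iInf_lt_iff.mp hC
  obtain ⟨hmem, hlt⟩ := iInf_lt_iff.mp hρ
  exact ⟨ρ, hmem, hlt⟩

open MeasureTheory in
lemma add_rep {u v : Vec N → ℝ} {ρu ρv : Measure (Param N)}
    (hu : ρu ∈ S.reps u) (hv : ρv ∈ S.reps v)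
    (hcu : S.cost ρu ≠ ⊤) (hcv : S.cost ρv ≠ ⊤) :
    ∃ μ ∈ S.reps (u + v), S.cost μ ≤ S.cost ρu + S.cost ρv := by
  classical
  set h : ℕ → Vec N → ℝ := fun k => if k = 0 then u else if k = 1 then v else 0 with hh
  set r : ℕ → Measure (Param N) := fun k =>
    if k = 0 then ρu else if k = 1 then ρv else Measure.dirac ((0,0,0) : Param N) with hr
  have hmem : ∀ k, r k ∈ S.reps (h k) := by
    intro k
    rcases Nat.eq_zero_or_pos k with rfl | hk
    · simpa [hh, hr] using hu
    · rcases Nat.lt_or_ge k 2 with hk2 | hk2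
      · have : k = 1 := by omega
        subst this
        simpa [hh, hr] using hv
      · have h0 : k ≠ 0 := by omega
        have h1 : k ≠ 1 := by omega
        simp only [hh, hr, if_neg h0, if_neg h1]
        exact S.zero_rep.1
  have hsupp : ∀ k ∉ ({0, 1} : Finset ℕ), S.cost (r k) = 0 := by
    intro k hk
    simp only [Finset.mem_insert, Finset.mem_singleton] at hk
    push_neg at hk
    simp only [hr, if_neg hk.1, if_neg hk.2]
    exact S.zero_rep.2
  have hts : ∑' k, S.cost (r k) = S.cost ρu + S.cost ρv := by
    rw [tsum_eq_sum hsupp]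
    rw [Finset.sum_insert (by norm_num), Finset.sum_singleton]
    simp [hr]
  have hFsupp : ∀ x, ∀ k ∉ ({0, 1} : Finset ℕ), h k x = 0 := by
    intro x k hk
    simp only [Finset.mem_insert, Finset.mem_singleton] at hk
    push_neg at hk
    simp [hh, if_neg hk.1, if_neg hk.2]
  have hF : ∀ x ∈ S.dom, (u + v) x = ∑' k, h k x := by
    intro x _
    rw [tsum_eq_sum (hFsupp x)]
    rw [Finset.sum_insert (by norm_num), Finset.sum_singleton]
    simp [hh]
  obtain ⟨μ, hμ, hcost⟩ := S.mix h r hmem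
    (by rw [hts]; exact ENNReal.add_ne_top.mpr ⟨hcu, hcv⟩) (u + v) hF
  exact ⟨μ, hμ, hcost.trans (le_of_eq hts)⟩

end Setting

set_option maxHeartbeats 2000000 in
/-- the Barron space `B_1` is complete: every Cauchy sequence with respect
to `‖·‖_{B_1}` converges in `‖·‖_{B_1}` to a function in `B_1`. -/
theorem barron_complete {N : ℕ} (S : Setting N) (f : ℕ → Vec N → ℝ)
    (hf : ∀ n, S.memB (f n))
    (hcauchy : ∀ ε : ℝ, 0 < ε → ∃ K : ℕ, ∀ m n : ℕ, K ≤ m → K ≤ n →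
      S.barron (f m - f n) < ENNReal.ofReal ε) :
    ∃ g : Vec N → ℝ, S.memB g ∧ ∀ ε : ℝ, 0 < ε → ∃ K : ℕ, ∀ n : ℕ, K ≤ n →
      S.barron (f n - g) < ENNReal.ofReal ε := by
  classical
  have h2r : ∀ m : ℕ, ENNReal.ofReal ((2⁻¹:ℝ) ^ m) = (2⁻¹ : ℝ≥0∞) ^ m := by
    intro m
    rw [ENNReal.ofReal_pow (by norm_num)]
    congr 1
    rw [ENNReal.ofReal_inv_of_pos (by norm_num)]
    norm_num
  have hpow_ne_top : ∀ m : ℕ, ((2⁻¹:ℝ≥0∞)) ^ m ≠ ⊤ := fun m =>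
    ENNReal.pow_ne_top (by norm_num)
  have hεpos : ∀ j : ℕ, (0:ℝ) < (2⁻¹:ℝ) ^ (j+2) := fun j => by positivity
  let Kf : ℕ → ℕ := fun j => (hcauchy ((2⁻¹:ℝ)^(j+2)) (hεpos j)).choose
  have hKf : ∀ j, ∀ m n', Kf j ≤ m → Kf j ≤ n' →
      S.barron (f m - f n') < ENNReal.ofReal ((2⁻¹:ℝ)^(j+2)) :=
    fun j => (hcauchy ((2⁻¹:ℝ)^(j+2)) (hεpos j)).choose_spec
  let nn : ℕ → ℕ := fun j => Nat.rec (Kf 0) (fun j ih => max (ih + 1) (Kf (j+1))) j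
  have hnn0 : ∀ j, j ≤ nn j := by
    intro j; induction j with
    | zero => exact Nat.zero_le _
    | succ j ih => exact le_trans (Nat.succ_le_succ ih) (le_max_left _ _)
  have hnnKf : ∀ j, Kf j ≤ nn j := by
    intro j; cases j with
    | zero => exact le_refl _
    | succ j => exact le_max_right _ _
  have hnnsucc : ∀ j, nn j + 1 ≤ nn (j+1) := fun j => le_max_left _ _
  set h : ℕ → Vec N → ℝ := fun j => f (nn (j+1)) - f (nn j) with hh_def
  have hn : ∀ j, S.barron (h j) < (2⁻¹:ℝ≥0∞)^(j+2) := by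
    intro j
    rw [← h2r]
    exact hKf j _ _ (le_trans (hnnKf j) (le_trans (Nat.le_succ _) (hnnsucc j))) (hnnKf j)
  choose ρ hρ hρc using fun j => S.exists_rep_of_barron_lt (hn j)
  have hcost : ∀ j, S.cost (ρ j) ≤ (2⁻¹:ℝ≥0∞)^(j+2) := fun j => (hρc j).le
  have hcfin : ∀ j, S.cost (ρ j) ≠ ⊤ := fun j => ne_top_of_le_ne_top (hpow_ne_top _) (hcost j)
  have htail : ∀ j, ∑' k, S.cost (ρ (k + j)) ≤ (2⁻¹:ℝ≥0∞)^(j+1) := by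
    intro j
    calc ∑' k, S.cost (ρ (k + j)) ≤ ∑' k : ℕ, (2⁻¹:ℝ≥0∞)^(k + j + 2) :=
        ENNReal.tsum_le_tsum fun k => hcost (k + j)
      _ = ∑' k : ℕ, (2⁻¹:ℝ≥0∞)^k * (2⁻¹:ℝ≥0∞)^(j+2) := by
          congr 1; funext k; rw [← pow_add]; ring_nf
      _ = (∑' k : ℕ, (2⁻¹:ℝ≥0∞)^k) * (2⁻¹:ℝ≥0∞)^(j+2) := ENNReal.tsum_mul_right
      _ = 2 * (2⁻¹:ℝ≥0∞)^(j+2) := by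
          rw [ENNReal.tsum_geometric, ENNReal.one_sub_inv_two, inv_inv]
      _ = (2⁻¹:ℝ≥0∞)^(j+1) := by
          rw [pow_succ, mul_comm (2:ℝ≥0∞), mul_assoc,
            ENNReal.inv_mul_cancel (by norm_num) (by norm_num), mul_one]
  have habs : ∀ j, ∀ x ∈ S.dom, |h j x| ≤ (2⁻¹:ℝ)^(j+2) := by
    intro j x hx
    refine (S.abs_le_cost (hρ j) hx (hcfin j)).trans ?_
    refine (ENNReal.toReal_mono (hpow_ne_top (j+2)) (hcost j)).trans (le_of_eq ?_)
    rw [ENNReal.toReal_pow, ENNReal.toReal_inv]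
    norm_num
  have hgeo : Summable (fun k : ℕ => (2⁻¹:ℝ)^(k+2)) := by
    have hg0 : Summable (fun k : ℕ => (2⁻¹:ℝ)^k) :=
      summable_geometric_of_lt_one (by norm_num) (by norm_num)
    exact (hg0.mul_right ((2⁻¹:ℝ)^2)).congr (fun k => by rw [← pow_add])
  have hsumm : ∀ x ∈ S.dom, Summable (fun k => h k x) := fun x hx =>
    Summable.of_abs (Summable.of_nonneg_of_le (fun k => abs_nonneg _)
      (fun k => habs k x hx) hgeo)
  obtain ⟨ρ₀, hρ₀, hρ₀c⟩ := S.exists_rep_of_barron_lt (hf (nn 0)).2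
  set aux : ℕ → Vec N → ℝ := fun k => Nat.rec (f (nn 0)) (fun k _ => h k) k with haux_def
  set r : ℕ → MeasureTheory.Measure (Param N) := fun k => Nat.rec ρ₀ (fun k _ => ρ k) k with hr_def
  have hrep : ∀ k, r k ∈ S.reps (aux k) := by
    intro k; cases k with
    | zero => exact hρ₀
    | succ k => exact hρ k
  have htail0 : ∑' k, S.cost (ρ k) ≤ (2⁻¹:ℝ≥0∞)^1 := by
    have := htail 0
    simpa using this
  have hrtot : ∑' k, S.cost (r k) ≠ ⊤ := by
    have h0 : ∑' k, S.cost (r k) = S.cost (r 0) + ∑' k, S.cost (r (k+1)) :=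
      tsum_eq_zero_add' ENNReal.summable
    rw [h0]
    refine ENNReal.add_ne_top.mpr ⟨hρ₀c.ne_top, ?_⟩
    exact ne_top_of_le_ne_top (hpow_ne_top 1) htail0
  set g : Vec N → ℝ := fun x => ∑' k, aux k x with hg_def
  obtain ⟨μg, hμg, hμgc⟩ := S.mix aux r hrep hrtot g (fun x _ => rfl)
  have hgmem : S.memB g := by
    refine ⟨⟨μg, hμg⟩, lt_of_le_of_lt (S.barron_le hμg) (lt_of_le_of_lt hμgc ?_)⟩
    exact lt_top_iff_ne_top.mpr hrtot
  have hgdom : ∀ x ∈ S.dom, g x = f (nn 0) x + ∑' k, h k x := by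
    intro x hx
    have hsa : Summable (fun k => aux k x) := (summable_nat_add_iff 1).mp (hsumm x hx)
    exact Summable.tsum_eq_zero_add hsa
  have hdiff : ∀ j, ∃ μ ∈ S.reps (f (nn j) - g), S.cost μ ≤ (2⁻¹:ℝ≥0∞)^(j+1) := by
    intro j
    set h' : ℕ → Vec N → ℝ := fun k => -(h (k + j)) with hh'_def
    set r' : ℕ → MeasureTheory.Measure (Param N) := fun k => (ρ (k + j)).map Setting.negA with hr'_def
    have hrep' : ∀ k, r' k ∈ S.reps (h' k) := fun k => (S.neg_rep (hρ (k + j))).1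
    have hcost' : ∑' k, S.cost (r' k) ≤ (2⁻¹:ℝ≥0∞)^(j+1) :=
      le_trans (ENNReal.tsum_le_tsum fun k => (S.neg_rep (hρ (k + j))).2) (htail j)
    have hF' : ∀ x ∈ S.dom, (f (nn j) - g) x = ∑' k, h' k x := by
      intro x hx
      have hsplit := Summable.sum_add_tsum_nat_add j (hsumm x hx)
      have htel : ∑ i ∈ Finset.range j, h i x = f (nn j) x - f (nn 0) x := by
        have h1 := Finset.sum_range_sub (fun i => f (nn i) x) j
        calc ∑ i ∈ Finset.range j, h i x
            = ∑ i ∈ Finset.range j, (f (nn (i+1)) x - f (nn i) x) := rfl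
          _ = f (nn j) x - f (nn 0) x := h1
      have hneg : ∑' k, h' k x = -∑' k, h (k + j) x := by
        rw [← tsum_neg]
        rfl
      rw [Pi.sub_apply, hgdom x hx, hneg]
      linarith [hsplit, htel]
    obtain ⟨μ, hμ, hc⟩ := S.mix h' r' hrep'
      (ne_top_of_le_ne_top (hpow_ne_top _) hcost') _ hF'
    exact ⟨μ, hμ, hc.trans hcost'⟩
  refine ⟨g, hgmem, ?_⟩
  intro ε hε
  have hε2 : (0:ℝ) < ε/2 := by positivity
  obtain ⟨j₀, hj₀⟩ := exists_pow_lt_of_lt_one hε2 (by norm_num : (2⁻¹:ℝ) < 1)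
  obtain ⟨K, hK⟩ := hcauchy (ε/2) hε2
  set j := max j₀ K with hj_def
  have hjpow : (2⁻¹:ℝ)^(j+1) < ε/2 :=
    lt_of_le_of_lt (pow_le_pow_of_le_one (by norm_num) (by norm_num) (by omega : j₀ ≤ j+1)) hj₀
  refine ⟨K, fun m hm => ?_⟩
  have hm1 : S.barron (f m - f (nn j)) < ENNReal.ofReal (ε/2) :=
    hK m (nn j) hm (le_trans (le_max_right _ _) (hnn0 j))
  obtain ⟨ρa, hρa, hca⟩ := S.exists_rep_of_barron_lt hm1
  obtain ⟨ρb, hρb, hcb⟩ := hdiff j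
  have hcbe : S.cost ρb < ENNReal.ofReal (ε/2) := by
    refine lt_of_le_of_lt hcb ?_
    rw [← h2r]
    exact (ENNReal.ofReal_lt_ofReal_iff hε2).mpr hjpow
  obtain ⟨μ, hμ, hc⟩ := S.add_rep hρa hρb
    (ne_top_of_le_ne_top ENNReal.ofReal_ne_top hca.le)
    (ne_top_of_le_ne_top ENNReal.ofReal_ne_top hcbe.le)
  have hfg : (f m - f (nn j)) + (f (nn j) - g) = f m - g := by
    funext x
    simp only [Pi.add_apply, Pi.sub_apply]
    ring
  rw [← hfg]
  refine lt_of_le_of_lt ((S.barron_le hμ).trans hc) ?_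
  calc S.cost ρa + S.cost ρb < ENNReal.ofReal (ε/2) + ENNReal.ofReal (ε/2) :=
      ENNReal.add_lt_add hca hcbe
    _ = ENNReal.ofReal ε := by
      rw [← ENNReal.ofReal_add hε2.le hε2.le]
      norm_num
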